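/- For all real numbers σ, ν ≠ 0 and all s ≠ 0 with e^{sσ} ≠ 1, the inequality (1 - 2e^{sσ}cos(sν) + e^{2sσ})/(1 - e^{sσ})² < (σ² + ν²)/σ² holds. -/

import Mathlib

/-!
Put `x = sσ`, `y = sν` and `E = eˣ`. The numerator is `(1 - E)² + 2E(1 - cos y)` and the right-hand
side is `1 + y²/x²`, so the claim is `2E(1 - cos y)/(1 - E)² < y²/x²`. This follows from
`1 - cos y < y²/2` and `x² E < (1 - E)²`; the latter holds because `(1 - E)² = E (2 sinh (x/2))²`
and `|sinh u| > |u|` for `u ≠ 0`.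
-/

open Real

lemma Real.sq_lt_sinh_sq {u : ℝ} (hu : u ≠ 0) : u ^ 2 < sinh u ^ 2 := by
  rw [sq_lt_sq, abs_sinh]
  exact self_lt_sinh_iff.2 (abs_pos.2 hu)

lemma Real.one_sub_exp_sq (x : ℝ) : (1 - exp x) ^ 2 = exp x * (2 * sinh (x / 2)) ^ 2 := by
  have hsq : exp x = exp (x / 2) ^ 2 := by rw [sq, ← exp_add, add_halves]
  have hinv : exp (x / 2) * exp (-(x / 2)) = 1 := by rw [← exp_add, add_neg_cancel, exp_zero]
  rw [sinh_eq, hsq]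
  linear_combination (2 * exp (x / 2) ^ 2 - exp (x / 2) * exp (-(x / 2)) - 1) * hinv

lemma Real.sq_mul_exp_lt_one_sub_exp_sq {x : ℝ} (hx : x ≠ 0) : x ^ 2 * exp x < (1 - exp x) ^ 2 := by
  have h : x ^ 2 < (2 * sinh (x / 2)) ^ 2 := by
    have := sq_lt_sinh_sq (div_ne_zero hx two_ne_zero)
    nlinarith
  rw [one_sub_exp_sq, mul_comm (x ^ 2)]
  exact mul_lt_mul_of_pos_left h (exp_pos x)

lemma Real.one_sub_two_exp_mul_cos_add_exp_div_lt {x y : ℝ} (hx : x ≠ 0) (hy : y ≠ 0) :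
    (1 - 2 * exp x * cos y + exp (2 * x)) / (1 - exp x) ^ 2 < (x ^ 2 + y ^ 2) / x ^ 2 := by
  have hE := exp_pos x
  have hD : 0 < (1 - exp x) ^ 2 := by
    have : 1 - exp x ≠ 0 := sub_ne_zero.2 fun h ↦ hx (exp_eq_one_iff x |>.1 h.symm)
    positivity
  have hcos : 1 - cos y < y ^ 2 / 2 := by linarith [one_sub_sq_div_two_lt_cos hy]
  have hexp2 : exp (2 * x) = exp x ^ 2 := by rw [sq, ← exp_add, two_mul]
  rw [hexp2, div_lt_div_iff₀ hD (by positivity)]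
  suffices 2 * exp x * (1 - cos y) * x ^ 2 < y ^ 2 * (1 - exp x) ^ 2 by linarith
  calc 2 * exp x * (1 - cos y) * x ^ 2
      < 2 * exp x * (y ^ 2 / 2) * x ^ 2 := by gcongr
    _ = y ^ 2 * (x ^ 2 * exp x) := by ring
    _ < y ^ 2 * (1 - exp x) ^ 2 := by gcongr; exact sq_mul_exp_lt_one_sub_exp_sq hx

theorem stmt0 (σ ν s : ℝ) (hσ : σ ≠ 0) (hν : ν ≠ 0) (hs : s ≠ 0) :
    (1 - 2 * Real.exp (s * σ) * Real.cos (s * ν) + Real.exp (2 * s * σ)) /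
      (1 - Real.exp (s * σ)) ^ 2 < (σ ^ 2 + ν ^ 2) / σ ^ 2 := by
  have hscale : (σ ^ 2 + ν ^ 2) / σ ^ 2 = ((s * σ) ^ 2 + (s * ν) ^ 2) / (s * σ) ^ 2 := by
    rw [mul_pow, mul_pow, ← mul_add, mul_div_mul_left _ _ (pow_ne_zero 2 hs)]
  rw [hscale, mul_assoc 2 s σ]
  exact one_sub_two_exp_mul_cos_add_exp_div_lt (mul_ne_zero hs hσ) (mul_ne_zero hs hν)
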